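/- (Anticode Bound, vector form) Let C ⊆ F_{q^m}^n be an F_{q^m}-linear vector rank-metric code with dim_{F_{q^m}}(C) ≤ m, for arbitrary positive integers m and n. Then dim_{F_{q^m}}(C) ≤ maxrk(C), where maxrk(C) = max{rk(v) : v ∈ C}. -/
import Mathlib


open Matrix

open Module Submodule

/-- The rank weight of `v : Fqm^n`: the dimension over `Fq` of the `Fq`-span of its entries. -/
noncomputable def rkw (Fq : Type*) [Field Fq] {Fqm : Type*} [Field Fqm] [Algebra Fq Fqm]
    {n : ℕ} (v : Fin n → Fqm) : ℕ :=
  Module.finrank Fq (Submodule.span Fq (Set.range v))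

/-- Maximum rank of a vector rank-metric code. -/
noncomputable def maxrkVec (Fq : Type*) [Field Fq] {Fqm : Type*} [Field Fqm] [Algebra Fq Fqm]
    {n : ℕ} (C : Submodule Fqm (Fin n → Fqm)) : ℕ :=
  sSup {r : ℕ | ∃ v ∈ C, rkw Fq v = r}

/-- Anticode Bound for vector rank-metric codes with `dim C ≤ m`, arbitrary `m`, `n`. -/
theorem stmt6 {Fq Fqm : Type*} [Field Fq] [Fintype Fq] [Field Fqm] [Algebra Fq Fqm]
    [FiniteDimensional Fq Fqm] {n : ℕ} (hn : 0 < n)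
    (C : Submodule Fqm (Fin n → Fqm))
    (hdim : Module.finrank Fqm C ≤ Module.finrank Fq Fqm) :
    Module.finrank Fqm C ≤ maxrkVec Fq C := by
  classical
  set k := Module.finrank Fqm C with hk
  set φ : Fin n → Module.Dual Fqm C := fun j => (LinearMap.proj j).comp C.subtype with hφ
  set W : Submodule Fqm (Module.Dual Fqm C) := span Fqm (Set.range φ) with hW
  have hco : W.dualCoannihilator = ⊥ := by
    apply le_bot_iff.mp
    intro x hx
    rw [mem_dualCoannihilator] at hx
    rw [Submodule.mem_bot]
    apply Subtype.ext
    funext j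
    exact hx (φ j) (subset_span ⟨j, rfl⟩)
  have hWtop : W = ⊤ := by
    have h1 := Subspace.finrank_add_finrank_dualCoannihilator_eq W
    rw [hco, finrank_bot, add_zero] at h1
    apply Submodule.eq_top_of_finrank_eq
    rw [h1, Subspace.dual_finrank_eq]
  -- extract a linearly independent spanning subset of range φ
  obtain ⟨b, hbsub, hbspan, hbli⟩ := exists_linearIndependent Fqm (Set.range φ)
  rw [← hW, hWtop] at hbspan
  have hbfin : b.Finite := Set.Finite.subset (Set.finite_range φ) hbsub
  have : Fintype b := hbfin.fintype
  have hbcard : Fintype.card b = k := by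
    have := finrank_span_set_eq_card hbli
    rw [hbspan] at this
    rw [Set.toFinset_card] at this
    rw [← this, finrank_top, Subspace.dual_finrank_eq]
  -- the evaluation map C → (b → Fqm)
  set L : C →ₗ[Fqm] (b → Fqm) := LinearMap.pi (fun f => (f : Module.Dual Fqm C)) with hL
  have hLinj : Function.Injective L := by
    rw [← LinearMap.ker_eq_bot]
    apply le_bot_iff.mp
    intro x hx
    rw [LinearMap.mem_ker] at hx
    rw [Submodule.mem_bot]
    have hall : ∀ g : Module.Dual Fqm C, g x = 0 := by
      intro g
      have hg : g ∈ span Fqm b := by rw [hbspan]; trivial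
      induction hg using Submodule.span_induction with
      | mem f hf => exact congrFun hx ⟨f, hf⟩
      | zero => simp
      | add f g _ _ hf hg => simp [hf, hg]
      | smul a f _ hf => simp [hf]
    exact (Module.forall_dual_apply_eq_zero_iff Fqm x).mp hall
  have hLsurj : Function.Surjective L := by
    rw [← LinearMap.injective_iff_surjective_of_finrank_eq_finrank]
    · exact hLinj
    · rw [Module.finrank_pi, hbcard]
  -- linearly independent elements of Fqm over Fq indexed by b
  set B := Module.finBasis Fq Fqm with hB
  have hcard : Fintype.card b ≤ Fintype.card (Fin (finrank Fq Fqm)) := by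
    rw [hbcard, Fintype.card_fin]; exact hdim
  obtain ⟨e⟩ := Function.Embedding.nonempty_of_card_le hcard
  set α : b → Fqm := fun f => B (e f) with hα
  have hαli : LinearIndependent Fq α := B.linearIndependent.comp e e.injective
  obtain ⟨c, hc⟩ := hLsurj α
  -- entries of c contain all the α f
  have hsub : Set.range α ⊆ Set.range (c : Fin n → Fqm) := by
    rintro - ⟨f, rfl⟩
    obtain ⟨j, hj⟩ := hbsub f.2
    refine ⟨j, ?_⟩
    have : L c f = α f := congrFun hc f
    rw [← this]
    simp only [hL, LinearMap.pi_apply]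
    rw [← hj]
    rfl
  have hk_le : k ≤ rkw Fq (c : Fin n → Fqm) := by
    have h1 : finrank Fq (span Fq (Set.range α)) ≤ rkw Fq (c : Fin n → Fqm) :=
      Submodule.finrank_mono (span_mono hsub)
    rwa [finrank_span_eq_card hαli, hbcard] at h1
  have hbdd : BddAbove {r : ℕ | ∃ v ∈ C, rkw Fq v = r} := by
    refine ⟨finrank Fq Fqm, ?_⟩
    rintro r ⟨v, -, rfl⟩
    exact Submodule.finrank_le _
  calc k ≤ rkw Fq (c : Fin n → Fqm) := hk_le
    _ ≤ maxrkVec Fq C := le_csSup hbdd ⟨c, c.2, rfl⟩
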